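/- Let ρ > 0, σ > 0 and γ ∈ ℝ. Set L_n = 2⌊√(2n)·σ⌋ + ⌊(8n/9)^{1/4}·γ⌋ and m_n = ⌊nρ⌋ (both are positive for all sufficiently large n). Then, as n → ∞, (1 + L_n/(3 m_n))^{3 m_n} / exp(L_n − 4σ²/(3ρ)) converges to 1. -/

import Mathlib

/-!
Write `(1 + L / (3m)) ^ (3m) = exp (3m log (1 + L / (3m)))`. Since `L_n ~ 2σ√(2n)` and
`m_n ~ ρn`, `L_n` is of order `√m_n`, so the expansion `log (1 + u) = u - u² / 2 + O(u³)` gives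
`3m log (1 + L / (3m)) = L - L² / (6m) + O(L³ / m²)`, where the error tends to `0` and
`L² / (6m) → 8σ² / (6ρ) = 4σ² / (3ρ)`.
-/

open Filter

/-- `L_n = 2⌊√(2n)·σ⌋ + ⌊(8n/9)^{1/4}·γ⌋`. -/
noncomputable def Lseq (σ γ : ℝ) (n : ℕ) : ℤ :=
  2 * ⌊Real.sqrt (2 * (n : ℝ)) * σ⌋ + ⌊(8 * (n : ℝ) / 9) ^ ((1 : ℝ) / 4) * γ⌋

/-- `m_n = ⌊nρ⌋`. -/
noncomputable def mseq (ρ : ℝ) (n : ℕ) : ℤ := ⌊(n : ℝ) * ρ⌋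

open Topology Real

section

variable {α : Type*} {l : Filter α}

lemma tendsto_floor_div_of_tendsto_div {x c : α → ℝ} {y : ℝ} (hc : Tendsto c l atTop)
    (hx : Tendsto (fun i => x i / c i) l (𝓝 y)) :
    Tendsto (fun i => (⌊x i⌋ : ℝ) / c i) l (𝓝 y) := by
  have hfract : Tendsto (fun i => Int.fract (x i) / c i) l (𝓝 0) := by
    refine squeeze_zero' ?_ ?_ (tendsto_inv_atTop_zero.comp hc)
    · filter_upwards [hc.eventually_gt_atTop 0] with i hi
      exact div_nonneg (Int.fract_nonneg _) hi.le
    · filter_upwards [hc.eventually_gt_atTop 0] with i hi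
      rw [Function.comp_apply, div_le_iff₀ hi, inv_mul_cancel₀ hi.ne']
      exact (Int.fract_lt_one _).le
  simpa [← Int.self_sub_floor, sub_div] using hx.sub hfract

lemma abs_log_one_add_sub_add_sq_div_two_le {u : ℝ} (hu : |u| ≤ 1 / 2) :
    |log (1 + u) - u + u ^ 2 / 2| ≤ 2 * |u| ^ 3 := by
  have h := abs_log_sub_add_sum_range_le (x := -u) (by rw [abs_neg]; linarith) 2
  simp only [Finset.sum_range_succ, Finset.sum_range_zero, abs_neg, sub_neg_eq_add] at h
  calc |log (1 + u) - u + u ^ 2 / 2| ≤ |u| ^ 3 / (1 - |u|) := by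
        convert h using 2; push_cast; ring
    _ ≤ |u| ^ 3 / (1 / 2) := by gcongr; linarith
    _ = 2 * |u| ^ 3 := by ring

lemma tendsto_div_of_tendsto_div_sqrt {a m : α → ℝ} {b : ℝ} (hm : Tendsto m l atTop)
    (ha : Tendsto (fun i => a i / √(m i)) l (𝓝 b)) :
    Tendsto (fun i => a i / m i) l (𝓝 0) := by
  refine (ha.div_atTop (tendsto_sqrt_atTop.comp hm)).congr' ?_
  filter_upwards [hm.eventually_ge_atTop 0] with i hi
  rw [Function.comp_apply, div_div, mul_self_sqrt hi]

lemma tendsto_mul_log_one_add_div_sub {a m : α → ℝ} {b : ℝ} (hm : Tendsto m l atTop)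
    (ha : Tendsto (fun i => a i / √(m i)) l (𝓝 b)) :
    Tendsto (fun i => m i * log (1 + a i / m i) - a i) l (𝓝 (-(b ^ 2 / 2))) := by
  have ht := tendsto_div_of_tendsto_div_sqrt hm ha
  have hsmall : ∀ᶠ i in l, |a i / m i| ≤ 1 / 2 :=
    ht.abs.eventually (ge_mem_nhds (by norm_num))
  have herr : Tendsto (fun i => m i * (log (1 + a i / m i) - a i / m i + (a i / m i) ^ 2 / 2))
      l (𝓝 0) := by
    refine squeeze_zero_norm' (a := fun i => 2 * |a i / √(m i)| ^ 3 / √(m i)) ?_ ?_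
    · filter_upwards [hm.eventually_gt_atTop 0, hsmall] with i hi hsm
      have hs : 0 < √(m i) := sqrt_pos.2 hi
      calc ‖m i * (log (1 + a i / m i) - a i / m i + (a i / m i) ^ 2 / 2)‖
          ≤ m i * (2 * |a i / m i| ^ 3) := by
            rw [norm_mul, norm_of_nonneg hi.le]
            exact mul_le_mul_of_nonneg_left (abs_log_one_add_sub_add_sq_div_two_le hsm) hi.le
        _ = 2 * |a i / √(m i)| ^ 3 / √(m i) := by
            have h4 : √(m i) ^ 4 = m i ^ 2 := by
              rw [show 4 = 2 * 2 by rfl, pow_mul, sq_sqrt hi.le]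
            rw [abs_div, abs_div, abs_of_pos hi, abs_of_pos hs]
            field_simp
            rw [h4]
            ring
    · simpa using ((ha.abs.pow 3).const_mul 2).div_atTop (tendsto_sqrt_atTop.comp hm)
  refine ((herr.sub ((ha.pow 2).div_const 2)).congr' ?_).trans (by rw [zero_sub])
  filter_upwards [hm.eventually_gt_atTop 0] with i hi
  simp only [div_pow, sq_sqrt hi.le]
  field_simp
  ring

lemma tendsto_one_add_div_zpow_div_exp {a : α → ℝ} {k : α → ℤ} {b : ℝ}
    (hk : Tendsto (fun i => (k i : ℝ)) l atTop)
    (ha : Tendsto (fun i => a i / √(k i)) l (𝓝 b)) :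
    Tendsto (fun i => (1 + a i / k i) ^ k i / exp (a i)) l (𝓝 (exp (-(b ^ 2 / 2)))) := by
  refine ((continuous_exp.tendsto _).comp (tendsto_mul_log_one_add_div_sub hk ha)).congr' ?_
  have hpos : ∀ᶠ i in l, 0 < 1 + a i / k i := by
    have h := (tendsto_div_of_tendsto_div_sqrt hk ha).const_add 1
    rw [add_zero] at h
    exact h.eventually_const_lt one_pos
  filter_upwards [hpos] with i hi
  rw [Function.comp_apply, exp_sub, ← log_zpow, exp_log (zpow_pos hi _)]

end

lemma tendsto_mseq_div_natCast (ρ : ℝ) :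
    Tendsto (fun n : ℕ => (mseq ρ n : ℝ) / n) atTop (𝓝 ρ) := by
  refine tendsto_floor_div_of_tendsto_div tendsto_natCast_atTop_atTop
    (tendsto_const_nhds.congr' ?_)
  filter_upwards [eventually_gt_atTop 0] with n hn
  field_simp

lemma tendsto_mseq_atTop {ρ : ℝ} (hρ : 0 < ρ) :
    Tendsto (fun n : ℕ => (mseq ρ n : ℝ)) atTop atTop := by
  refine tendsto_atTop_mono (fun n => (Int.sub_one_lt_floor _).le) ?_
  exact tendsto_atTop_add_const_right _ _ (tendsto_natCast_atTop_atTop.atTop_mul_const hρ)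

lemma tendsto_mul_rpow_one_div_four_div_sqrt {c : ℝ} (hc : 0 ≤ c) :
    Tendsto (fun x : ℝ => (c * x) ^ ((1 : ℝ) / 4) / √x) atTop (𝓝 0) := by
  have h := (tendsto_rpow_neg_atTop (y := 1 / 4) (by norm_num)).const_mul (c ^ ((1 : ℝ) / 4))
  rw [mul_zero] at h
  refine h.congr' ?_
  filter_upwards [eventually_gt_atTop 0] with x hx
  rw [mul_rpow hc hx.le, sqrt_eq_rpow, mul_div_assoc, ← rpow_sub hx]
  norm_num

lemma tendsto_Lseq_div_sqrt (σ γ : ℝ) :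
    Tendsto (fun n : ℕ => (Lseq σ γ n : ℝ) / √n) atTop (𝓝 (2 * (√2 * σ))) := by
  have hsqrt : Tendsto (fun n : ℕ => √(n : ℝ)) atTop atTop :=
    tendsto_sqrt_atTop.comp tendsto_natCast_atTop_atTop
  have hmain : Tendsto (fun n : ℕ => (⌊√(2 * (n : ℝ)) * σ⌋ : ℝ) / √n) atTop (𝓝 (√2 * σ)) := by
    refine tendsto_floor_div_of_tendsto_div hsqrt (tendsto_const_nhds.congr' ?_)
    filter_upwards [eventually_gt_atTop 0] with n hn
    rw [sqrt_mul zero_le_two]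
    field_simp
  have hlower : Tendsto (fun n : ℕ => (⌊(8 * (n : ℝ) / 9) ^ ((1 : ℝ) / 4) * γ⌋ : ℝ) / √n)
      atTop (𝓝 0) := by
    refine tendsto_floor_div_of_tendsto_div hsqrt ?_
    have h := ((tendsto_mul_rpow_one_div_four_div_sqrt (by norm_num : (0 : ℝ) ≤ 8 / 9)).comp
      tendsto_natCast_atTop_atTop).mul_const γ
    rw [zero_mul] at h
    refine h.congr fun n => ?_
    rw [Function.comp_apply, div_mul_eq_mul_div, mul_div_right_comm 8]
  simpa [Lseq, add_div, mul_div_assoc] using (hmain.const_mul 2).add hlower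

lemma tendsto_Lseq_div_sqrt_three_mul_mseq (σ γ : ℝ) {ρ : ℝ} (hρ : 0 < ρ) :
    Tendsto (fun n : ℕ => (Lseq σ γ n : ℝ) / √(3 * mseq ρ n))
      atTop (𝓝 (2 * (√2 * σ) / √(3 * ρ))) := by
  refine ((tendsto_Lseq_div_sqrt σ γ).div
    (((tendsto_mseq_div_natCast ρ).const_mul 3).sqrt) (by positivity)).congr' ?_
  filter_upwards [eventually_gt_atTop 0] with n hn
  rw [Pi.div_apply, ← mul_div_assoc, sqrt_div' _ (Nat.cast_nonneg n),
    div_div_div_cancel_right₀ (by positivity)]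

theorem tendsto_pow_three_general (ρ σ γ : ℝ) (hρ : 0 < ρ) :
    Tendsto
      (fun n : ℕ =>
        (1 + (Lseq σ γ n : ℝ) / (3 * (mseq ρ n : ℝ))) ^ (3 * mseq ρ n) /
          Real.exp ((Lseq σ γ n : ℝ) - 4 * σ ^ 2 / (3 * ρ)))
      atTop (nhds 1) := by
  have hk : Tendsto (fun n : ℕ => ((3 * mseq ρ n : ℤ) : ℝ)) atTop atTop := by
    push_cast
    exact (tendsto_mseq_atTop hρ).const_mul_atTop three_pos
  have hL : Tendsto (fun n : ℕ => (Lseq σ γ n : ℝ) / √((3 * mseq ρ n : ℤ) : ℝ))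
      atTop (𝓝 (2 * (√2 * σ) / √(3 * ρ))) := by
    push_cast
    exact tendsto_Lseq_div_sqrt_three_mul_mseq σ γ hρ
  have hlim : exp (-((2 * (√2 * σ) / √(3 * ρ)) ^ 2 / 2)) * exp (4 * σ ^ 2 / (3 * ρ)) = 1 := by
    rw [← exp_add, div_pow, mul_pow, mul_pow, sq_sqrt zero_le_two, sq_sqrt (by positivity),
      ← exp_zero]
    congr 1
    field_simp
    ring
  refine (hlim ▸ (tendsto_one_add_div_zpow_div_exp hk hL).mul_const _).congr fun n => ?_
  push_cast
  rw [exp_sub, div_div_eq_mul_div, div_mul_eq_mul_div]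

/-- As `n → ∞`, `(1 + L_n/(3 m_n))^{3 m_n} / exp(L_n − 4σ²/(3ρ))` converges to `1`. -/
theorem tendsto_pow_three (ρ σ γ : ℝ) (hρ : 0 < ρ) (hσ : 0 < σ) :
    Tendsto
      (fun n : ℕ =>
        (1 + (Lseq σ γ n : ℝ) / (3 * (mseq ρ n : ℝ))) ^ (3 * mseq ρ n) /
          Real.exp ((Lseq σ γ n : ℝ) - 4 * σ ^ 2 / (3 * ρ)))
      atTop (nhds 1) :=
  tendsto_pow_three_general ρ σ γ hρ
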